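/- arXiv:1003.0095 — 3 statements merged into one kernel-verified Lean document; each statement's English description precedes it below -/
import Mathlib

section
/- Suppose the l-th diagonal entry [A_{jk}]_{ll} is strictly positive for all users j, k and all streams l = 1,…,L_j, and let P_max > 0. Let F be the set of power allocations p with p_{kl} ≥ 0 for all k, l and Σ_{k=1}^K Σ_{l=1}^{L_k} p_{kl} ≤ P_max. If p* ∈ F attains the maximum over F of min_{1≤k≤K} SINR̄_k(p)/γ_k, then all users achieve the same SINR-to-target ratio: there exists a real C ≥ 0 such that SINR̄_k(p*)/γ_k = C for every k = 1,…,K. -/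
open Matrix Finset

noncomputable def Amat {K M : ℕ} {N L : Fin K → ℕ}
    (H : ∀ k : Fin K, Matrix (Fin M) (Fin (N k)) ℂ)
    (U : ∀ j : Fin K, Matrix (Fin M) (Fin (L j)) ℂ)
    (V : ∀ k : Fin K, Matrix (Fin (N k)) (Fin (L k)) ℂ)
    (j k : Fin K) : Matrix (Fin (L j)) (Fin (L j)) ℂ :=
  (U j)ᴴ * H k * V k * (V k)ᴴ * (H k)ᴴ * U j

/-- The real diagonal entry `[A_{jk}]_{ll}`. -/
noncomputable def Adiag {K M : ℕ} {N L : Fin K → ℕ}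
    (H : ∀ k : Fin K, Matrix (Fin M) (Fin (N k)) ℂ)
    (U : ∀ j : Fin K, Matrix (Fin M) (Fin (L j)) ℂ)
    (V : ∀ k : Fin K, Matrix (Fin (N k)) (Fin (L k)) ℂ)
    (j k : Fin K) (l : Fin (L j)) : ℝ :=
  (Amat H U V j k l l).re

/-- The average downlink SINR of user `k` under power allocation `p`. -/
noncomputable def avgSINR {K M : ℕ} {N L : Fin K → ℕ}
    (H : ∀ k : Fin K, Matrix (Fin M) (Fin (N k)) ℂ)
    (U : ∀ j : Fin K, Matrix (Fin M) (Fin (L j)) ℂ)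
    (V : ∀ k : Fin K, Matrix (Fin (N k)) (Fin (L k)) ℂ)
    (σsq : ℝ) (p : ∀ k : Fin K, Fin (L k) → ℝ) (k : Fin K) : ℝ :=
  (∑ l, p k l * Adiag H U V k k l) /
    ((∑ j ∈ univ.erase k, ∑ l, p j l * Adiag H U V j k l) + (L k : ℝ) * σsq)

/-! If some users had a ratio `SINR̄_k / γ_k` strictly above the minimum `m`, scale their powers
by a factor `t < 1` close enough to `1` that their ratios stay above `m`. Since every cross gain
`[A_{jk}]_{ll}` is positive, each user at the minimum then sees strictly less interference, so its
ratio rises above `m` as well: the new allocation uses no more power and has a larger minimum,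
contradicting optimality. The minimum is positive (the uniform allocation already achieves
positive ratios), which is what makes the signal power of every user positive at the optimum. -/

section Scaling

variable {ι : Type*} [DecidableEq ι] {β : ι → Type*}

noncomputable def scaleOn (T : Finset ι) (t : ℝ) (p : ∀ i, β i → ℝ) : ∀ i, β i → ℝ :=
  fun i b => (if i ∈ T then t else 1) * p i b

variable {T : Finset ι} {t : ℝ} {p : ∀ i, β i → ℝ}

lemma scaleOn_nonneg (ht : 0 ≤ t) (hp : ∀ i b, 0 ≤ p i b) (i : ι) (b : β i) :
    0 ≤ scaleOn T t p i b := by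
  unfold scaleOn
  split_ifs
  · exact mul_nonneg ht (hp i b)
  · exact mul_nonneg zero_le_one (hp i b)

lemma scaleOn_le (ht : t ≤ 1) (hp : ∀ i b, 0 ≤ p i b) (i : ι) (b : β i) :
    scaleOn T t p i b ≤ p i b := by
  unfold scaleOn
  split_ifs
  · exact mul_le_of_le_one_left (hp i b) ht
  · rw [one_mul]

end Scaling

lemma sum_mul_pos_of_sum_mul_pos {α : Type*} [Fintype α] {p a b : α → ℝ}
    (hp : ∀ l, 0 ≤ p l) (hb : ∀ l, 0 < b l) (h : 0 < ∑ l, p l * a l) :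
    0 < ∑ l, p l * b l := by
  obtain ⟨l, -, hl⟩ := exists_ne_zero_of_sum_ne_zero h.ne'
  have hpl : 0 < p l := (hp l).lt_of_ne (left_ne_zero_of_mul hl).symm
  exact sum_pos' (fun l _ => mul_nonneg (hp l) (hb l).le) ⟨l, mem_univ l, mul_pos hpl (hb l)⟩

lemma exists_lt_one_forall_lt_mul {ι : Type*} {s : Finset ι} {f : ι → ℝ} {m : ℝ} (hm : 0 ≤ m)
    (hs : s.Nonempty) (hf : ∀ i ∈ s, m < f i) : ∃ t, 0 ≤ t ∧ t < 1 ∧ ∀ i ∈ s, m < t * f i := by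
  have hmr : m < s.inf' hs f := (lt_inf'_iff hs).mpr hf
  have hr : 0 < s.inf' hs f := hm.trans_lt hmr
  obtain ⟨t, hmt, ht1⟩ := exists_between ((div_lt_one hr).mpr hmr)
  have ht0 : 0 ≤ t := (div_nonneg hm hr.le).trans hmt.le
  refine ⟨t, ht0, ht1, fun i hi => ?_⟩
  calc m < t * s.inf' hs f := (div_lt_iff₀ hr).mp hmt
    _ ≤ t * f i := mul_le_mul_of_nonneg_left (inf'_le _ hi) ht0

section SINR

variable {K M : ℕ} {N L : Fin K → ℕ}
  {H : ∀ k : Fin K, Matrix (Fin M) (Fin (N k)) ℂ}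
  {U : ∀ j : Fin K, Matrix (Fin M) (Fin (L j)) ℂ}
  {V : ∀ k : Fin K, Matrix (Fin (N k)) (Fin (L k)) ℂ}
  {σsq : ℝ} {p : ∀ k : Fin K, Fin (L k) → ℝ}

variable (H U V) in
noncomputable def signalPower (p : ∀ k : Fin K, Fin (L k) → ℝ) (k : Fin K) : ℝ :=
  ∑ l, p k l * Adiag H U V k k l

variable (H U V) in
noncomputable def interferencePower (p : ∀ k : Fin K, Fin (L k) → ℝ) (k : Fin K) : ℝ :=
  ∑ j ∈ univ.erase k, ∑ l, p j l * Adiag H U V j k l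

lemma avgSINR_eq_signalPower_div (k : Fin K) :
    avgSINR H U V σsq p k =
      signalPower H U V p k / (interferencePower H U V p k + L k * σsq) :=
  rfl

lemma interferencePower_add_noise_pos (hA : ∀ j k l, 0 ≤ Adiag H U V j k l)
    (hp : ∀ k l, 0 ≤ p k l) (hσ : 0 < σsq) {k : Fin K} (hL : 0 < L k) :
    0 < interferencePower H U V p k + L k * σsq :=
  add_pos_of_nonneg_of_pos
    (sum_nonneg fun j _ => sum_nonneg fun l _ => mul_nonneg (hp j l) (hA j k l))
    (mul_pos (Nat.cast_pos.mpr hL) hσ)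

lemma avgSINR_pos (hA : ∀ j k l, 0 < Adiag H U V j k l) (hp : ∀ k l, 0 < p k l)
    (hσ : 0 < σsq) {k : Fin K} (hL : 0 < L k) : 0 < avgSINR H U V σsq p k :=
  div_pos (sum_pos (fun l _ => mul_pos (hp k l) (hA k k l)) (univ_nonempty_iff.mpr ⟨⟨0, hL⟩⟩))
    (interferencePower_add_noise_pos (fun j k l => (hA j k l).le) (fun k l => (hp k l).le) hσ hL)

lemma signalPower_pos_of_avgSINR_pos (hA : ∀ j k l, 0 ≤ Adiag H U V j k l)
    (hp : ∀ k l, 0 ≤ p k l) (hσ : 0 < σsq) {k : Fin K} (hL : 0 < L k)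
    (h : 0 < avgSINR H U V σsq p k) : 0 < signalPower H U V p k :=
  (div_pos_iff_of_pos_right (interferencePower_add_noise_pos hA hp hσ hL)).mp h

lemma exists_feasible_forall_avgSINR_pos (hK : 0 < K) (hL : ∀ k, 1 ≤ L k)
    (hA : ∀ j k l, 0 < Adiag H U V j k l) (hσ : 0 < σsq) {Pmax : ℝ} (hP : 0 < Pmax) :
    ∃ p : ∀ k : Fin K, Fin (L k) → ℝ, (∀ k l, 0 ≤ p k l) ∧ ∑ k, ∑ l, p k l ≤ Pmax ∧
      ∀ k, 0 < avgSINR H U V σsq p k := by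
  have hsumL : (0 : ℝ) < ∑ k, (L k : ℝ) :=
    sum_pos (fun k _ => Nat.cast_pos.mpr (hL k)) (univ_nonempty_iff.mpr ⟨⟨0, hK⟩⟩)
  have hc : 0 < Pmax / ∑ k, (L k : ℝ) := div_pos hP hsumL
  refine ⟨fun _ _ => Pmax / ∑ k, (L k : ℝ), fun _ _ => hc.le, le_of_eq ?_,
    fun k => avgSINR_pos hA (fun _ _ => hc) hσ (hL k)⟩
  simp only [sum_const, card_univ, Fintype.card_fin, nsmul_eq_mul, ← sum_mul]
  exact mul_div_cancel₀ _ hsumL.ne'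

variable {T : Finset (Fin K)} {t : ℝ}

lemma signalPower_scaleOn (k : Fin K) :
    signalPower H U V (scaleOn T t p) k = (if k ∈ T then t else 1) * signalPower H U V p k := by
  simp only [signalPower, scaleOn, mul_sum, mul_assoc]

lemma interferencePower_scaleOn_le (hA : ∀ j k l, 0 ≤ Adiag H U V j k l)
    (hp : ∀ k l, 0 ≤ p k l) (ht : t ≤ 1) (k : Fin K) :
    interferencePower H U V (scaleOn T t p) k ≤ interferencePower H U V p k :=
  sum_le_sum fun j _ => sum_le_sum fun l _ =>
    mul_le_mul_of_nonneg_right (scaleOn_le ht hp j l) (hA j k l)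

lemma interferencePower_scaleOn_lt (hA : ∀ j k l, 0 < Adiag H U V j k l)
    (hp : ∀ k l, 0 ≤ p k l) (ht : t < 1) {j k : Fin K} (hj : j ∈ T) (hjk : j ≠ k)
    (hsignal : 0 < signalPower H U V p j) :
    interferencePower H U V (scaleOn T t p) k < interferencePower H U V p k := by
  refine sum_lt_sum (fun i _ => sum_le_sum fun l _ =>
    mul_le_mul_of_nonneg_right (scaleOn_le ht.le hp i l) (hA i k l).le)
    ⟨j, mem_erase.mpr ⟨hjk, mem_univ j⟩, ?_⟩
  have hcross : 0 < ∑ l, p j l * Adiag H U V j k l :=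
    sum_mul_pos_of_sum_mul_pos (hp j) (hA j k) hsignal
  simp only [scaleOn, if_pos hj, mul_assoc, ← mul_sum]
  exact mul_lt_of_lt_one_left hcross ht

lemma mul_avgSINR_le_avgSINR_scaleOn (hA : ∀ j k l, 0 ≤ Adiag H U V j k l)
    (hp : ∀ k l, 0 ≤ p k l) (hσ : 0 < σsq) (ht0 : 0 ≤ t) (ht1 : t ≤ 1) {k : Fin K}
    (hL : 0 < L k) (hk : k ∈ T) :
    t * avgSINR H U V σsq p k ≤ avgSINR H U V σsq (scaleOn T t p) k := by
  rw [avgSINR_eq_signalPower_div, avgSINR_eq_signalPower_div, signalPower_scaleOn, if_pos hk,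
    mul_div_assoc']
  exact div_le_div_of_nonneg_left
    (mul_nonneg ht0 (sum_nonneg fun l _ => mul_nonneg (hp k l) (hA k k l)))
    (interferencePower_add_noise_pos hA (scaleOn_nonneg ht0 hp) hσ hL)
    (add_le_add_left (interferencePower_scaleOn_le hA hp ht1 k) _)

lemma avgSINR_lt_avgSINR_scaleOn (hA : ∀ j k l, 0 < Adiag H U V j k l)
    (hp : ∀ k l, 0 ≤ p k l) (hσ : 0 < σsq) (ht0 : 0 ≤ t) (ht1 : t < 1) {j k : Fin K}
    (hL : 0 < L k) (hj : j ∈ T) (hk : k ∉ T)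
    (hsignal_j : 0 < signalPower H U V p j) (hsignal_k : 0 < signalPower H U V p k) :
    avgSINR H U V σsq p k < avgSINR H U V σsq (scaleOn T t p) k := by
  have hA' : ∀ j k l, 0 ≤ Adiag H U V j k l := fun j k l => (hA j k l).le
  rw [avgSINR_eq_signalPower_div, avgSINR_eq_signalPower_div, signalPower_scaleOn, if_neg hk,
    one_mul]
  exact div_lt_div_of_pos_left hsignal_k
    (interferencePower_add_noise_pos hA' (scaleOn_nonneg ht0 hp) hσ hL)
    (add_lt_add_left (interferencePower_scaleOn_lt hA hp ht1 hj (ne_of_mem_of_not_mem hj hk)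
      hsignal_j) _)

lemma lt_avgSINR_scaleOn_div (hA : ∀ j k l, 0 < Adiag H U V j k l) (hp : ∀ k l, 0 ≤ p k l)
    (hσ : 0 < σsq) (hL : ∀ k, 1 ≤ L k) {γ : Fin K → ℝ} (hγ : ∀ k, 0 < γ k) {m : ℝ}
    (hm : 0 < m) (ht0 : 0 ≤ t) (ht1 : t < 1) (hTne : T.Nonempty)
    (hin : ∀ k ∈ T, m < t * (avgSINR H U V σsq p k / γ k))
    (hge : ∀ k, m ≤ avgSINR H U V σsq p k / γ k) (k : Fin K) :
    m < avgSINR H U V σsq (scaleOn T t p) k / γ k := by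
  have hA' : ∀ j k l, 0 ≤ Adiag H U V j k l := fun j k l => (hA j k l).le
  have hsignal : ∀ k, 0 < signalPower H U V p k := fun k =>
    signalPower_pos_of_avgSINR_pos hA' hp hσ (hL k)
      ((div_pos_iff_of_pos_right (hγ k)).mp (hm.trans_le (hge k)))
  by_cases hk : k ∈ T
  · calc m < t * (avgSINR H U V σsq p k / γ k) := hin k hk
      _ = t * avgSINR H U V σsq p k / γ k := mul_div_assoc' ..
      _ ≤ avgSINR H U V σsq (scaleOn T t p) k / γ k :=
        div_le_div_of_nonneg_right (mul_avgSINR_le_avgSINR_scaleOn hA' hp hσ ht0 ht1.le (hL k)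
          hk) (hγ k).le
  · obtain ⟨j, hj⟩ := hTne
    calc m ≤ avgSINR H U V σsq p k / γ k := hge k
      _ < avgSINR H U V σsq (scaleOn T t p) k / γ k :=
        (div_lt_div_iff_of_pos_right (hγ k)).mpr
          (avgSINR_lt_avgSINR_scaleOn hA hp hσ ht0 ht1 (hL k) hj hk (hsignal j) (hsignal k))

end SINR

/-- SINR balancing at the optimum of Problem Pr. -/
theorem sinr_balancing_of_max_min {K M : ℕ} {N L : Fin K → ℕ}
    (hK : 0 < K) (hL : ∀ k, 1 ≤ L k)
    (H : ∀ k : Fin K, Matrix (Fin M) (Fin (N k)) ℂ)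
    (U : ∀ j : Fin K, Matrix (Fin M) (Fin (L j)) ℂ)
    (V : ∀ k : Fin K, Matrix (Fin (N k)) (Fin (L k)) ℂ)
    (σsq : ℝ) (hσ : 0 < σsq)
    (γ : Fin K → ℝ) (hγ : ∀ k, 0 < γ k)
    (hA : ∀ j k : Fin K, ∀ l : Fin (L j), 0 < Adiag H U V j k l)
    (Pmax : ℝ) (hP : 0 < Pmax)
    (pstar : ∀ k : Fin K, Fin (L k) → ℝ)
    (hstar_nonneg : ∀ k l, 0 ≤ pstar k l)
    (hstar_sum : ∑ k, ∑ l, pstar k l ≤ Pmax)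
    (hopt : ∀ p : ∀ k : Fin K, Fin (L k) → ℝ, (∀ k l, 0 ≤ p k l) →
      (∑ k, ∑ l, p k l ≤ Pmax) →
      univ.inf' (Finset.univ_nonempty_iff.mpr (Fin.pos_iff_nonempty.mp hK))
        (fun k => avgSINR H U V σsq p k / γ k) ≤
      univ.inf' (Finset.univ_nonempty_iff.mpr (Fin.pos_iff_nonempty.mp hK))
        (fun k => avgSINR H U V σsq pstar k / γ k)) :
    ∃ C : ℝ, 0 ≤ C ∧ ∀ k : Fin K, avgSINR H U V σsq pstar k / γ k = C := by
  have hne : (univ : Finset (Fin K)).Nonempty := univ_nonempty_iff.mpr ⟨⟨0, hK⟩⟩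
  set ratio := fun p k => avgSINR H U V σsq p k / γ k
  set m := univ.inf' hne (ratio pstar)
  have hge : ∀ k, m ≤ ratio pstar k := fun k => inf'_le _ (mem_univ k)
  have hm : 0 < m := by
    obtain ⟨p₀, hp₀_nonneg, hp₀_sum, hp₀_pos⟩ := exists_feasible_forall_avgSINR_pos hK hL hA hσ hP
    exact ((lt_inf'_iff hne).mpr fun k _ => div_pos (hp₀_pos k) (hγ k)).trans_le
      (hopt p₀ hp₀_nonneg hp₀_sum)
  refine ⟨m, hm.le, fun k₀ => ?_⟩
  by_contra hk₀
  set T := univ.filter fun k => m < ratio pstar k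
  have hTne : T.Nonempty := ⟨k₀, mem_filter.mpr ⟨mem_univ k₀, (hge k₀).lt_of_ne' hk₀⟩⟩
  obtain ⟨t, ht0, ht1, hin⟩ :=
    exists_lt_one_forall_lt_mul hm.le hTne fun k hk => (mem_filter.mp hk).2
  have hfeasible : ∑ k, ∑ l, scaleOn T t pstar k l ≤ Pmax :=
    (sum_le_sum fun k _ => sum_le_sum fun l _ => scaleOn_le ht1.le hstar_nonneg k l).trans hstar_sum
  have hbetter : m < univ.inf' hne (ratio (scaleOn T t pstar)) := (lt_inf'_iff hne).mpr fun k _ =>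
    lt_avgSINR_scaleOn_div hA hstar_nonneg hσ hL hγ hm ht0 ht1 hTne hin hge k
  exact (hopt _ (scaleOn_nonneg ht0 hstar_nonneg) hfeasible).not_gt hbetter
end

section
/- Assume ‖V_k^H H_k^H U_k‖_F > 0 for every k. Define the K × K real diagonal matrix D = diag(L_1² γ_1/‖V_1^H H_1^H U_1‖_F², …, L_K² γ_K/‖V_K^H H_K^H U_K‖_F²), the K × K real matrix Ψ with Ψ_{kj} = ‖V_k^H H_k^H U_j‖_F²/(L_k L_j) for j ≠ k and Ψ_{kk} = 0, and the vector σ_vec ∈ ℝ^K with every entry equal to σ². Then for any vector p = (p_1,…,p_K) of nonnegative reals: SINR̄_k^{grp}(p) = γ_k for every k if and only if (I_K − DΨ) p = D σ_vec. In particular, if I_K − DΨ is invertible, then p = (I_K − DΨ)^{-1} D σ_vec is the unique vector satisfying these SINR equations. -/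
/-! Clearing the positive denominator of `SINR̄_k = γ_k` turns it into
`p_k - D_kk (Ψ p)_k = D_kk σ²`, which is row `k` of `(I - DΨ) p = D σ`. -/

open Matrix Finset

/-- The squared Frobenius norm `‖X‖_F² = trace(X Xᴴ)` of a complex matrix. -/
noncomputable def frobNormSq {m n : ℕ} (X : Matrix (Fin m) (Fin n) ℂ) : ℝ :=
  ∑ i, ∑ j, ‖X i j‖ ^ 2

/-- The average downlink SINR of user `k` under group power allocation,
where user `k`'s power `pg k` is split evenly among its `L k` streams. -/
noncomputable def groupSINR {K M : ℕ} {N L : Fin K → ℕ}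
    (H : ∀ k : Fin K, Matrix (Fin M) (Fin (N k)) ℂ)
    (U : ∀ j : Fin K, Matrix (Fin M) (Fin (L j)) ℂ)
    (V : ∀ k : Fin K, Matrix (Fin (N k)) (Fin (L k)) ℂ)
    (σsq : ℝ) (pg : Fin K → ℝ) (k : Fin K) : ℝ :=
  (pg k / (L k : ℝ) ^ 2 * frobNormSq ((V k)ᴴ * (H k)ᴴ * U k)) /
    ((∑ j ∈ univ.erase k,
        pg j / ((L j : ℝ) * (L k : ℝ)) * frobNormSq ((V k)ᴴ * (H k)ᴴ * U j)) + σsq)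

theorem Matrix.mulVec_eq_iff_eq_nonsing_inv_mulVec {n R : Type*} [Fintype n] [DecidableEq n]
    [CommRing R] {A : Matrix n n R} (hA : IsUnit A) {x b : n → R} :
    A *ᵥ x = b ↔ x = A⁻¹ *ᵥ b := by
  have hdet : IsUnit A.det := (isUnit_iff_isUnit_det A).mp hA
  constructor
  · rintro rfl
    rw [mulVec_mulVec, nonsing_inv_mul _ hdet, one_mulVec]
  · rintro rfl
    rw [mulVec_mulVec, mul_nonsing_inv _ hdet, one_mulVec]

theorem Matrix.of_ite_diag_zero_mulVec_apply {n R : Type*} [Fintype n] [DecidableEq n]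
    [NonUnitalNonAssocSemiring R] (f : n → n → R) (x : n → R) (i : n) :
    (of (fun i j => if j = i then 0 else f i j) *ᵥ x) i = ∑ j ∈ univ.erase i, f i j * x j := by
  rw [mulVec, dotProduct, ← sum_erase_add _ _ (mem_univ i)]
  simp only [of_apply, if_true, zero_mul, add_zero]
  exact sum_congr rfl fun j hj => by rw [if_neg (ne_of_mem_erase hj)]

theorem frobNormSq_nonneg {m n : ℕ} (X : Matrix (Fin m) (Fin n) ℂ) : 0 ≤ frobNormSq X := by
  unfold frobNormSq
  positivity

theorem div_add_eq_iff_sub_mul_eq {p l f s σ γ : ℝ} (hl : l ≠ 0) (hf : f ≠ 0)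
    (hden : s + σ ≠ 0) : p / l * f / (s + σ) = γ ↔ p - l * γ / f * s = l * γ / f * σ := by
  rw [div_eq_iff hden, div_mul_eq_mul_div, div_eq_iff hl, sub_eq_iff_eq_add', ← mul_add,
    div_mul_eq_mul_div, eq_div_iff hf]
  constructor <;> intro h <;> linear_combination h

theorem groupSINR_eq_iff {K M : ℕ} {N L : Fin K → ℕ} (hL : ∀ k, 1 ≤ L k)
    (H : ∀ k : Fin K, Matrix (Fin M) (Fin (N k)) ℂ)
    (U : ∀ j : Fin K, Matrix (Fin M) (Fin (L j)) ℂ)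
    (V : ∀ k : Fin K, Matrix (Fin (N k)) (Fin (L k)) ℂ)
    {σsq : ℝ} (hσ : 0 < σsq) (γ : ℝ) {pg : Fin K → ℝ} (hpg : ∀ k, 0 ≤ pg k) {k : Fin K}
    (hF : 0 < frobNormSq ((V k)ᴴ * (H k)ᴴ * U k)) :
    groupSINR H U V σsq pg k = γ ↔
      pg k - (L k : ℝ) ^ 2 * γ / frobNormSq ((V k)ᴴ * (H k)ᴴ * U k) *
        ∑ j ∈ univ.erase k, frobNormSq ((V k)ᴴ * (H k)ᴴ * U j) / ((L k : ℝ) * (L j : ℝ)) * pg j =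
      (L k : ℝ) ^ 2 * γ / frobNormSq ((V k)ᴴ * (H k)ᴴ * U k) * σsq := by
  have hL_pos (j : Fin K) : (0 : ℝ) < L j := by exact_mod_cast hL j
  have hinterference :
      ∑ j ∈ univ.erase k, pg j / ((L j : ℝ) * (L k : ℝ)) * frobNormSq ((V k)ᴴ * (H k)ᴴ * U j) =
        ∑ j ∈ univ.erase k, frobNormSq ((V k)ᴴ * (H k)ᴴ * U j) / ((L k : ℝ) * (L j : ℝ)) * pg j :=
    sum_congr rfl fun j _ => by ring
  have hinterference_nonneg : 0 ≤ ∑ j ∈ univ.erase k,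
      frobNormSq ((V k)ᴴ * (H k)ᴴ * U j) / ((L k : ℝ) * (L j : ℝ)) * pg j :=
    sum_nonneg fun j _ => by
      have := frobNormSq_nonneg ((V k)ᴴ * (H k)ᴴ * U j)
      have := hL_pos k; have := hL_pos j; have := hpg j
      positivity
  rw [groupSINR, hinterference]
  exact div_add_eq_iff_sub_mul_eq (pow_pos (hL_pos k) 2).ne' hF.ne' (by positivity)

theorem group_sinr_targets_iff_linear_system_general {K M : ℕ} {N L : Fin K → ℕ}
    (hL : ∀ k, 1 ≤ L k)
    (H : ∀ k : Fin K, Matrix (Fin M) (Fin (N k)) ℂ)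
    (U : ∀ j : Fin K, Matrix (Fin M) (Fin (L j)) ℂ)
    (V : ∀ k : Fin K, Matrix (Fin (N k)) (Fin (L k)) ℂ)
    (σsq : ℝ) (hσ : 0 < σsq)
    (γ : Fin K → ℝ)
    (hF : ∀ k, 0 < frobNormSq ((V k)ᴴ * (H k)ᴴ * U k))
    (D : Matrix (Fin K) (Fin K) ℝ)
    (hD : D = Matrix.diagonal fun k =>
      (L k : ℝ) ^ 2 * γ k / frobNormSq ((V k)ᴴ * (H k)ᴴ * U k))
    (Ψ : Matrix (Fin K) (Fin K) ℝ)
    (hΨ : Ψ = Matrix.of fun k j =>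
      if j = k then 0
      else frobNormSq ((V k)ᴴ * (H k)ᴴ * U j) / ((L k : ℝ) * (L j : ℝ)))
    (σvec : Fin K → ℝ) (hσvec : σvec = fun _ => σsq)
    (pg : Fin K → ℝ) (hpg : ∀ k, 0 ≤ pg k) :
    ((∀ k, groupSINR H U V σsq pg k = γ k) ↔
      (1 - D * Ψ).mulVec pg = D.mulVec σvec) ∧
    (IsUnit (1 - D * Ψ) →
      ((∀ k, groupSINR H U V σsq pg k = γ k) ↔
        pg = (1 - D * Ψ)⁻¹.mulVec (D.mulVec σvec))) := by
  have hrows : (∀ k, groupSINR H U V σsq pg k = γ k) ↔ (1 - D * Ψ) *ᵥ pg = D *ᵥ σvec := by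
    subst hD hΨ hσvec
    simp only [funext_iff, sub_mulVec, one_mulVec, ← mulVec_mulVec, Pi.sub_apply,
      mulVec_diagonal, of_ite_diag_zero_mulVec_apply]
    exact forall_congr' fun k => groupSINR_eq_iff hL H U V hσ (γ k) hpg (hF k)
  exact ⟨hrows, fun hunit => hrows.trans (mulVec_eq_iff_eq_nonsing_inv_mulVec hunit)⟩

/-- group power minimization as a linear system `(I − DΨ) p = Dσ`. -/
theorem group_sinr_targets_iff_linear_system {K M : ℕ} {N L : Fin K → ℕ}
    (hK : 0 < K) (hL : ∀ k, 1 ≤ L k)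
    (H : ∀ k : Fin K, Matrix (Fin M) (Fin (N k)) ℂ)
    (U : ∀ j : Fin K, Matrix (Fin M) (Fin (L j)) ℂ)
    (V : ∀ k : Fin K, Matrix (Fin (N k)) (Fin (L k)) ℂ)
    (σsq : ℝ) (hσ : 0 < σsq)
    (γ : Fin K → ℝ) (hγ : ∀ k, 0 < γ k)
    (hF : ∀ k, 0 < frobNormSq ((V k)ᴴ * (H k)ᴴ * U k))
    (D : Matrix (Fin K) (Fin K) ℝ)
    (hD : D = Matrix.diagonal fun k =>
      (L k : ℝ) ^ 2 * γ k / frobNormSq ((V k)ᴴ * (H k)ᴴ * U k))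
    (Ψ : Matrix (Fin K) (Fin K) ℝ)
    (hΨ : Ψ = Matrix.of fun k j =>
      if j = k then 0
      else frobNormSq ((V k)ᴴ * (H k)ᴴ * U j) / ((L k : ℝ) * (L j : ℝ)))
    (σvec : Fin K → ℝ) (hσvec : σvec = fun _ => σsq)
    (pg : Fin K → ℝ) (hpg : ∀ k, 0 ≤ pg k) :
    ((∀ k, groupSINR H U V σsq pg k = γ k) ↔
      (1 - D * Ψ).mulVec pg = D.mulVec σvec) ∧
    (IsUnit (1 - D * Ψ) →
      ((∀ k, groupSINR H U V σsq pg k = γ k) ↔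
        pg = (1 - D * Ψ)⁻¹.mulVec (D.mulVec σvec))) :=
  group_sinr_targets_iff_linear_system_general hL H U V σsq hσ γ hF D hD Ψ hΨ σvec hσvec pg hpg
end

section
/- Assume ‖V_k^H H_k^H U_k‖_F > 0 for every k, and let P_max > 0 and C > 0. Define D, Ψ, σ_vec as follows: D = diag(L_k² γ_k/‖V_k^H H_k^H U_k‖_F²), Ψ_{kj} = ‖V_k^H H_k^H U_j‖_F²/(L_k L_j) for j ≠ k, Ψ_{kk} = 0, and σ_vec ∈ ℝ^K has every entry σ². Define the (K+1) × (K+1) extended coupling matrix Υ with block form Υ = [[DΨ, Dσ_vec],[(1/P_max) 1^T DΨ, (1/P_max) 1^T Dσ_vec]], where 1 ∈ ℝ^K is the all-ones vector. Then for any vector p ∈ ℝ^K with nonnegative entries, the extended vector (p; 1) ∈ ℝ^{K+1} satisfies Υ (p; 1) = (1/C) (p; 1) if and only if both Σ_{k=1}^K p_k = P_max and SINR̄_k^{grp}(p)/γ_k = C for every k = 1,…,K. -/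
open Matrix Finset

/-!
The first `K` rows of `Υ (p; 1) = C⁻¹ (p; 1)` read `D (Ψ p + σ) = C⁻¹ p`; for user `k` this is
`L_k² γ_k (I_k + σ²) = C⁻¹ p_k ‖V_kᴴ H_kᴴ U_k‖_F²` with `I_k` its interference, i.e. after
clearing the (positive) denominators `SINR_k / γ_k = C`. Granting these rows, the last row is
`P_max⁻¹ 1ᵀ D (Ψ p + σ) = P_max⁻¹ C⁻¹ Σ p_k`, which equals `C⁻¹` exactly when `Σ p_k = P_max`.
-/

theorem fromBlocks_mulVec_sumElim_one_eq_smul_iff {R n : Type*} [Field R] [Fintype n]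
    (A : Matrix n n R) (b : n → R) {P μ : R} (hP : P ≠ 0) (hμ : μ ≠ 0) (p : n → R) :
    (fromBlocks A (of fun k (_ : Fin 1) => b k) (of fun (_ : Fin 1) j => 1 / P * ∑ k, A k j)
        (of fun (_ : Fin 1) (_ : Fin 1) => 1 / P * ∑ k, b k)) *ᵥ Sum.elim p (fun _ => 1) =
      μ • Sum.elim p (fun _ => 1) ↔
    A *ᵥ p + b = μ • p ∧ ∑ k, p k = P := by
  have hlastCol : (of fun k (_ : Fin 1) => b k) *ᵥ (fun _ => 1) = b := by
    ext k; simp [mulVec, dotProduct]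
  have hcolSums : ∑ j, (∑ k, A k j) * p j = ∑ k, (A *ᵥ p) k := by
    simp only [mulVec, dotProduct, sum_mul]
    exact sum_comm
  have hlastRow : (of fun (_ : Fin 1) j => 1 / P * ∑ k, A k j) *ᵥ p +
      (of fun (_ : Fin 1) (_ : Fin 1) => 1 / P * ∑ k, b k) *ᵥ (fun _ => 1) =
      fun _ => 1 / P * ∑ k, (A *ᵥ p + b) k := by
    ext i
    simp only [Pi.add_apply, mulVec, dotProduct, of_apply, Fin.sum_univ_one, mul_one,
      mul_assoc, ← mul_sum, ← mul_add, sum_add_distrib, hcolSums]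
  have hsmul : μ • Sum.elim p (fun (_ : Fin 1) => 1) = Sum.elim (μ • p) (fun _ => μ) := by
    ext (k | i) <;> simp
  rw [fromBlocks_mulVec, hsmul, Sum.elim_eq_iff]
  simp only [Sum.elim_comp_inl, Sum.elim_comp_inr, hlastCol, hlastRow]
  refine and_congr_right fun htop => ?_
  simp only [htop, funext_iff, Pi.smul_apply, smul_eq_mul, ← mul_sum]
  rw [forall_const, one_div, inv_mul_eq_iff_eq_mul₀ hP, mul_comm P, mul_right_inj' hμ]

theorem offDiag_div_mul_mulVec {R n : Type*} [Field R] [Fintype n] [DecidableEq n]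
    (G : n → n → R) (l p : n → R) :
    (of fun k j => if j = k then 0 else G k j / (l k * l j)) *ᵥ p =
      fun k => ∑ j ∈ univ.erase k, p j / (l j * l k) * G k j := by
  ext k
  rw [mulVec, dotProduct, ← sum_erase_add _ _ (mem_univ k)]
  simp only [of_apply, if_pos, zero_mul, add_zero]
  refine sum_congr rfl fun j hj => ?_
  rw [if_neg (ne_of_mem_erase hj)]
  ring

section SINR

variable {K M : ℕ} {N L : Fin K → ℕ} (H : ∀ k : Fin K, Matrix (Fin M) (Fin (N k)) ℂ)
  (U : ∀ j : Fin K, Matrix (Fin M) (Fin (L j)) ℂ)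
  (V : ∀ k : Fin K, Matrix (Fin (N k)) (Fin (L k)) ℂ)

noncomputable def interference (pg : Fin K → ℝ) (k : Fin K) : ℝ :=
  ∑ j ∈ univ.erase k, pg j / ((L j : ℝ) * (L k : ℝ)) * frobNormSq ((V k)ᴴ * (H k)ᴴ * U j)

theorem interference_nonneg {pg : Fin K → ℝ} (hpg : ∀ j, 0 ≤ pg j) (k : Fin K) :
    0 ≤ interference H U V pg k :=
  sum_nonneg fun j _ => mul_nonneg (div_nonneg (hpg j) (by positivity)) (frobNormSq_nonneg _)

theorem groupSINR_div_eq_iff {σsq g C : ℝ} {pg : Fin K → ℝ} {k : Fin K} (hL : L k ≠ 0)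
    (hσ : 0 < σsq) (hg : g ≠ 0) (hF : frobNormSq ((V k)ᴴ * (H k)ᴴ * U k) ≠ 0) (hC : C ≠ 0)
    (hpg : ∀ j, 0 ≤ pg j) :
    groupSINR H U V σsq pg k / g = C ↔
      (L k : ℝ) ^ 2 * g / frobNormSq ((V k)ᴴ * (H k)ᴴ * U k) * (interference H U V pg k + σsq) =
        1 / C * pg k := by
  have hden : interference H U V pg k + σsq ≠ 0 :=
    (add_pos_of_nonneg_of_pos (interference_nonneg H U V hpg k) hσ).ne'
  have hLk : (L k : ℝ) ≠ 0 := Nat.cast_ne_zero.mpr hL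
  change pg k / (L k : ℝ) ^ 2 * _ / (interference H U V pg k + σsq) / g = C ↔ _
  field_simp
  exact eq_comm

end SINR

theorem extended_coupling_eigen_iff_balanced_general {K M : ℕ} {N L : Fin K → ℕ}
    (hL : ∀ k, 1 ≤ L k)
    (H : ∀ k : Fin K, Matrix (Fin M) (Fin (N k)) ℂ)
    (U : ∀ j : Fin K, Matrix (Fin M) (Fin (L j)) ℂ)
    (V : ∀ k : Fin K, Matrix (Fin (N k)) (Fin (L k)) ℂ)
    (σsq : ℝ) (hσ : 0 < σsq)
    (γ : Fin K → ℝ) (hγ : ∀ k, 0 < γ k)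
    (hF : ∀ k, 0 < frobNormSq ((V k)ᴴ * (H k)ᴴ * U k))
    (Pmax : ℝ) (hP : 0 < Pmax) (C : ℝ) (hC : 0 < C)
    (D : Matrix (Fin K) (Fin K) ℝ)
    (hD : D = Matrix.diagonal fun k =>
      (L k : ℝ) ^ 2 * γ k / frobNormSq ((V k)ᴴ * (H k)ᴴ * U k))
    (Ψ : Matrix (Fin K) (Fin K) ℝ)
    (hΨ : Ψ = Matrix.of fun k j =>
      if j = k then 0
      else frobNormSq ((V k)ᴴ * (H k)ᴴ * U j) / ((L k : ℝ) * (L j : ℝ)))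
    (σvec : Fin K → ℝ) (hσvec : σvec = fun _ => σsq)
    (Υ : Matrix (Fin K ⊕ Fin 1) (Fin K ⊕ Fin 1) ℝ)
    (hΥ : Υ = Matrix.fromBlocks (D * Ψ)
      (Matrix.of fun k (_ : Fin 1) => D.mulVec σvec k)
      (Matrix.of fun (_ : Fin 1) j => (1 / Pmax) * ∑ k, (D * Ψ) k j)
      (Matrix.of fun (_ : Fin 1) (_ : Fin 1) => (1 / Pmax) * ∑ k, D.mulVec σvec k))
    (pg : Fin K → ℝ) (hpg : ∀ k, 0 ≤ pg k) :
    Υ.mulVec (Sum.elim pg fun _ => (1 : ℝ)) =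
        (1 / C) • Sum.elim pg (fun _ => (1 : ℝ)) ↔
      (∑ k, pg k = Pmax ∧ ∀ k, groupSINR H U V σsq pg k / γ k = C) := by
  subst hD hΨ hσvec hΥ
  rw [fromBlocks_mulVec_sumElim_one_eq_smul_iff _ _ hP.ne' (one_div_ne_zero hC.ne'),
    ← mulVec_mulVec, ← mulVec_add, offDiag_div_mul_mulVec, and_comm, funext_iff]
  refine and_congr_right' (forall_congr' fun k => ?_)
  rw [mulVec_diagonal, Pi.smul_apply, smul_eq_mul]
  exact (groupSINR_div_eq_iff H U V (Nat.one_le_iff_ne_zero.mp (hL k)) hσ (hγ k).ne' (hF k).ne'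
    hC.ne' hpg).symm

/-- eigen-system characterization of SINR balancing with full power,
via the extended coupling matrix `Υ`. -/
theorem extended_coupling_eigen_iff_balanced {K M : ℕ} {N L : Fin K → ℕ}
    (hK : 0 < K) (hL : ∀ k, 1 ≤ L k)
    (H : ∀ k : Fin K, Matrix (Fin M) (Fin (N k)) ℂ)
    (U : ∀ j : Fin K, Matrix (Fin M) (Fin (L j)) ℂ)
    (V : ∀ k : Fin K, Matrix (Fin (N k)) (Fin (L k)) ℂ)
    (σsq : ℝ) (hσ : 0 < σsq)
    (γ : Fin K → ℝ) (hγ : ∀ k, 0 < γ k)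
    (hF : ∀ k, 0 < frobNormSq ((V k)ᴴ * (H k)ᴴ * U k))
    (Pmax : ℝ) (hP : 0 < Pmax) (C : ℝ) (hC : 0 < C)
    (D : Matrix (Fin K) (Fin K) ℝ)
    (hD : D = Matrix.diagonal fun k =>
      (L k : ℝ) ^ 2 * γ k / frobNormSq ((V k)ᴴ * (H k)ᴴ * U k))
    (Ψ : Matrix (Fin K) (Fin K) ℝ)
    (hΨ : Ψ = Matrix.of fun k j =>
      if j = k then 0
      else frobNormSq ((V k)ᴴ * (H k)ᴴ * U j) / ((L k : ℝ) * (L j : ℝ)))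
    (σvec : Fin K → ℝ) (hσvec : σvec = fun _ => σsq)
    (Υ : Matrix (Fin K ⊕ Fin 1) (Fin K ⊕ Fin 1) ℝ)
    (hΥ : Υ = Matrix.fromBlocks (D * Ψ)
      (Matrix.of fun k (_ : Fin 1) => D.mulVec σvec k)
      (Matrix.of fun (_ : Fin 1) j => (1 / Pmax) * ∑ k, (D * Ψ) k j)
      (Matrix.of fun (_ : Fin 1) (_ : Fin 1) => (1 / Pmax) * ∑ k, D.mulVec σvec k))
    (pg : Fin K → ℝ) (hpg : ∀ k, 0 ≤ pg k) :
    Υ.mulVec (Sum.elim pg fun _ => (1 : ℝ)) =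
        (1 / C) • Sum.elim pg (fun _ => (1 : ℝ)) ↔
      (∑ k, pg k = Pmax ∧ ∀ k, groupSINR H U V σsq pg k / γ k = C) :=
  extended_coupling_eigen_iff_balanced_general hL H U V σsq hσ γ hγ hF Pmax hP C hC D hD Ψ hΨ σvec
    hσvec Υ hΥ pg hpg
end
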